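/- Let X, Y, Z be compact Hausdorff spaces and let A, B, D be MV-subalgebras of C(X), C(Y), C(Z) respectively, and let α : X×(Y×Z) → (X×Y)×Z be the canonical homeomorphism (x,(y,z)) ↦ ((x,y),z). Then the map f ↦ f ∘ α is a bijection from (A ⊗ B) ⊗ D onto A ⊗ (B ⊗ D) preserving ⊕, * and 0; in particular the semisimple tensor product of MV-algebras is associative. -/

import Mathlib

open Set

/-- `A` is an MV-subalgebra of `C(X, ℝ)`: a set of continuous `[0,1]`-valued functions
containing `0` and closed under `f ⊕ g = (f + g) ⊓ 1` and `f* = 1 - f`. -/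
def IsMVSub {X : Type*} [TopologicalSpace X] (A : Set C(X, ℝ)) : Prop :=
  (∀ f ∈ A, ∀ x, f x ∈ Icc (0:ℝ) 1) ∧
  (0 : C(X, ℝ)) ∈ A ∧
  (∀ f ∈ A, ∀ g ∈ A, (f + g) ⊓ 1 ∈ A) ∧
  (∀ f ∈ A, 1 - f ∈ A)

/-- The smallest MV-subalgebra of `C(X, ℝ)` containing `S`. -/
def mvGen {X : Type*} [TopologicalSpace X] (S : Set C(X, ℝ)) : Set C(X, ℝ) :=
  ⋂₀ {A | IsMVSub A ∧ S ⊆ A}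

/-- The semisimple tensor product of MV-subalgebras `A ⊆ C(X, ℝ)` and `B ⊆ C(Y, ℝ)`:
the MV-subalgebra of `C(X × Y, ℝ)` generated by the pointwise products `(x,y) ↦ a x * b y`. -/
def mvTens {X Y : Type*} [TopologicalSpace X] [TopologicalSpace Y]
    (A : Set C(X, ℝ)) (B : Set C(Y, ℝ)) : Set C(X × Y, ℝ) :=
  mvGen {h | ∃ a ∈ A, ∃ b ∈ B, ∀ p : X × Y, h p = a p.1 * b p.2}

/-
Multiplying by a fixed `k ∈ G` turns `⊕` and `*` into MV-operations of `G`: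
`(f ⊕ g)·k = (f·k ⊕ g·k) ∧ k` and `f*·k = (k* ⊕ f·k)*`. Hence the `f` with `f·k ∈ G` form an
MV-subalgebra, and induction on generated MV-subalgebras gives
`(A ⊗ B) ⊗ D = ⟨a·b·d⟩` and `A ⊗ (B ⊗ D) = ⟨a·b·d⟩` on the two triple products.
Precomposition with the associator matches these generators, so it restricts to a bijection.
-/

section MVSubalgebra

variable {X : Type*} [TopologicalSpace X]

def UnitValued (S : Set C(X, ℝ)) : Prop :=
  ∀ f ∈ S, ∀ x, f x ∈ Icc (0:ℝ) 1

lemma subset_mvGen (S : Set C(X, ℝ)) : S ⊆ mvGen S :=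
  fun _ hf => mem_sInter.2 fun _ hA => hA.2 hf

lemma mvGen_subset {S A : Set C(X, ℝ)} (hA : IsMVSub A) (hSA : S ⊆ A) : mvGen S ⊆ A :=
  sInter_subset_of_mem ⟨hA, hSA⟩

lemma mvGen_mono {S T : Set C(X, ℝ)} (hST : S ⊆ T) : mvGen S ⊆ mvGen T :=
  fun _ hf => mem_sInter.2 fun A hA => hf A ⟨hA.1, hST.trans hA.2⟩

lemma isMVSub_unitValued : IsMVSub {f : C(X, ℝ) | ∀ x, f x ∈ Icc (0:ℝ) 1} := by
  refine ⟨fun f hf => hf, fun x => by simp, ?_, ?_⟩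
  · intro f hf g hg x
    have := hf x; have := hg x
    simp only [ContinuousMap.inf_apply, ContinuousMap.add_apply, ContinuousMap.one_apply,
      mem_Icc] at *
    exact ⟨le_inf (by linarith) zero_le_one, inf_le_right⟩
  · intro f hf x
    have := hf x
    simp only [ContinuousMap.sub_apply, ContinuousMap.one_apply, mem_Icc] at *
    constructor <;> linarith

lemma unitValued_mvGen {S : Set C(X, ℝ)} (hS : UnitValued S) : UnitValued (mvGen S) :=
  fun _ hf => mvGen_subset isMVSub_unitValued hS hf

lemma isMVSub_mvGen {S : Set C(X, ℝ)} (hS : UnitValued S) : IsMVSub (mvGen S) :=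
  ⟨unitValued_mvGen hS, mem_sInter.2 fun _ hA => hA.1.2.1,
    fun _ hf _ hg => mem_sInter.2 fun A hA => hA.1.2.2.1 _ (hf A hA) _ (hg A hA),
    fun _ hf => mem_sInter.2 fun A hA => hA.1.2.2.2 _ (hf A hA)⟩

lemma mvGen_induction {S : Set C(X, ℝ)} (hS : UnitValued S) {p : C(X, ℝ) → Prop}
    (mem : ∀ s ∈ S, p s) (zero : p 0)
    (oplus : ∀ f ∈ mvGen S, ∀ g ∈ mvGen S, p f → p g → p ((f + g) ⊓ 1))
    (neg : ∀ f ∈ mvGen S, p f → p (1 - f)) {f : C(X, ℝ)} (hf : f ∈ mvGen S) : p f := by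
  have hG := isMVSub_mvGen hS
  have hP : IsMVSub {f | f ∈ mvGen S ∧ p f} :=
    ⟨fun f hf => hG.1 f hf.1, ⟨hG.2.1, zero⟩,
      fun f hf g hg => ⟨hG.2.2.1 f hf.1 g hg.1, oplus f hf.1 g hg.1 hf.2 hg.2⟩,
      fun f hf => ⟨hG.2.2.2 f hf.1, neg f hf.1 hf.2⟩⟩
  exact (mvGen_subset hP (fun s hs => ⟨subset_mvGen S hs, mem s hs⟩) hf).2

namespace IsMVSub

variable {A : Set C(X, ℝ)}

lemma one_mem (hA : IsMVSub A) : (1 : C(X, ℝ)) ∈ A := by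
  simpa using hA.2.2.2 0 hA.2.1

/-- `f ∧ g = f ⊙ (f* ⊕ g)`, written with `⊕` and `*` only. -/
lemma inf_mem (hA : IsMVSub A) {f g : C(X, ℝ)} (hf : f ∈ A) (hg : g ∈ A) : f ⊓ g ∈ A := by
  have hf' := hA.2.2.2 f hf
  convert hA.2.2.2 _ (hA.2.2.1 _ hf' _ (hA.2.2.2 _ (hA.2.2.1 _ hf' _ hg))) using 1
  ext x
  have := hA.1 f hf x; have := hA.1 g hg x
  simp only [mem_Icc, ContinuousMap.sub_apply, ContinuousMap.one_apply, ContinuousMap.add_apply,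
    ContinuousMap.inf_apply] at *
  rcases le_total (f x) (g x) with h | h
  · rw [inf_eq_right.2 (by linarith : (1 : ℝ) ≤ 1 - f x + g x), inf_eq_left.2 h,
      inf_eq_left.2 (by linarith : 1 - f x + (1 - 1 : ℝ) ≤ 1)]
    ring
  · rw [inf_eq_left.2 (by linarith : 1 - f x + g x ≤ 1), inf_eq_right.2 h,
      inf_eq_left.2 (by linarith : 1 - f x + (1 - (1 - f x + g x)) ≤ 1)]
    ring

end IsMVSub

lemma ContinuousMap.oplus_comp {W : Type*} [TopologicalSpace W] (f g : C(X, ℝ)) (φ : C(W, X)) :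
    ((f + g) ⊓ 1).comp φ = (f.comp φ + g.comp φ) ⊓ 1 := by
  ext; simp

lemma ContinuousMap.one_sub_comp {W : Type*} [TopologicalSpace W] (f : C(X, ℝ)) (φ : C(W, X)) :
    (1 - f).comp φ = 1 - f.comp φ := by
  ext; simp

end MVSubalgebra

section Precomposition

lemma min_add_one_mul {a b d : ℝ} (hd0 : 0 ≤ d) (hd1 : d ≤ 1) :
    min (a + b) 1 * d = min (min (a * d + b * d) 1) d := by
  rw [← add_mul]
  rcases le_total (a + b) 1 with h | h
  · have h2 : (a + b) * d ≤ d := by nlinarith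
    rw [min_eq_left h, min_eq_left (h2.trans hd1), min_eq_left h2]
  · have h2 : d ≤ (a + b) * d := by nlinarith
    rw [min_eq_right h, one_mul]
    rcases le_total ((a + b) * d) 1 with h3 | h3
    · rw [min_eq_left h3, min_eq_right h2]
    · rw [min_eq_right h3, min_eq_right hd1]

lemma one_sub_mul_eq_one_sub_min {a d : ℝ} (ha : a ≤ 1) (hd : 0 ≤ d) :
    (1 - a) * d = 1 - min ((1 - d) + a * d) 1 := by
  rw [min_eq_left (by nlinarith)]; ring

variable {V W : Type*} [TopologicalSpace V] [TopologicalSpace W]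

lemma IsMVSub.comp_mul_mem_of_mem_mvGen {G : Set C(W, ℝ)} (hG : IsMVSub G)
    {S : Set C(V, ℝ)} (hS : UnitValued S) (π : C(W, V)) {k : C(W, ℝ)} (hk : k ∈ G)
    (hgen : ∀ s ∈ S, s.comp π * k ∈ G) {f : C(V, ℝ)} (hf : f ∈ mvGen S) :
    f.comp π * k ∈ G := by
  have hbd := unitValued_mvGen hS
  refine mvGen_induction hS hgen (by simpa using hG.2.1) ?_ ?_ hf
  · intro f hf g hg hfk hgk
    convert hG.inf_mem (hG.2.2.1 _ hfk _ hgk) hk using 1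
    ext w
    exact min_add_one_mul (hG.1 k hk w).1 (hG.1 k hk w).2
  · intro f hf hfk
    convert hG.2.2.2 _ (hG.2.2.1 _ (hG.2.2.2 k hk) _ hfk) using 1
    ext w
    exact one_sub_mul_eq_one_sub_min (hbd f hf _).2 (hG.1 k hk w).1

lemma mapsTo_mvGen_comp {S : Set C(V, ℝ)} {T : Set C(W, ℝ)} (hS : UnitValued S)
    (hT : UnitValued T) (φ : C(W, V)) (h : MapsTo (fun f => f.comp φ) S T) :
    MapsTo (fun f => f.comp φ) (mvGen S) (mvGen T) := by
  have hG := isMVSub_mvGen hT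
  refine fun f hf => mvGen_induction hS (fun s hs => subset_mvGen T (h hs))
    (by simpa using hG.2.1) ?_ ?_ hf
  · intro f _ g _ hf hg
    simpa only [ContinuousMap.oplus_comp] using hG.2.2.1 _ hf _ hg
  · intro f _ hf
    simpa only [ContinuousMap.one_sub_comp] using hG.2.2.2 _ hf

lemma bijOn_mvGen_comp_homeomorph {S : Set C(V, ℝ)} {T : Set C(W, ℝ)} (hS : UnitValued S)
    (hT : UnitValued T) (e : W ≃ₜ V)
    (hST : MapsTo (fun f => f.comp (e : C(W, V))) S T)
    (hTS : MapsTo (fun f => f.comp (e.symm : C(V, W))) T S) :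
    BijOn (fun f => f.comp (e : C(W, V))) (mvGen S) (mvGen T) := by
  refine ⟨mapsTo_mvGen_comp hS hT _ hST,
    fun f _ g _ hfg => (ContinuousMap.cancel_right e.surjective).1 hfg, fun g hg => ?_⟩
  exact ⟨g.comp e.symm, mapsTo_mvGen_comp hT hS _ hTS hg, by ext; simp⟩

end Precomposition

section Tensor

variable {X Y Z : Type*} [TopologicalSpace X] [TopologicalSpace Y] [TopologicalSpace Z]

def pureTensors (A : Set C(X, ℝ)) (B : Set C(Y, ℝ)) : Set C(X × Y, ℝ) :=
  {h | ∃ a ∈ A, ∃ b ∈ B, ∀ p : X × Y, h p = a p.1 * b p.2}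

lemma mvTens_eq_mvGen (A : Set C(X, ℝ)) (B : Set C(Y, ℝ)) :
    mvTens A B = mvGen (pureTensors A B) := rfl

lemma comp_fst_mul_comp_snd_mem_pureTensors {A : Set C(X, ℝ)} {B : Set C(Y, ℝ)}
    {a : C(X, ℝ)} {b : C(Y, ℝ)} (ha : a ∈ A) (hb : b ∈ B) :
    a.comp .fst * b.comp .snd ∈ pureTensors A B :=
  ⟨a, ha, b, hb, fun _ => rfl⟩

lemma eq_of_mem_pureTensors {A : Set C(X, ℝ)} {B : Set C(Y, ℝ)} {h : C(X × Y, ℝ)}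
    (hh : h ∈ pureTensors A B) : ∃ a ∈ A, ∃ b ∈ B, h = a.comp .fst * b.comp .snd :=
  let ⟨a, ha, b, hb, h⟩ := hh
  ⟨a, ha, b, hb, ContinuousMap.ext h⟩

lemma unitValued_pureTensors {A : Set C(X, ℝ)} {B : Set C(Y, ℝ)} (hA : UnitValued A)
    (hB : UnitValued B) : UnitValued (pureTensors A B) := by
  rintro h ⟨a, ha, b, hb, hh⟩ p
  obtain ⟨ha0, ha1⟩ := hA a ha p.1
  obtain ⟨hb0, hb1⟩ := hB b hb p.2
  rw [hh p]
  exact ⟨mul_nonneg ha0 hb0, mul_le_one₀ ha1 hb0 hb1⟩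

lemma one_mem_pureTensors {A : Set C(X, ℝ)} {B : Set C(Y, ℝ)} (hA : (1 : C(X, ℝ)) ∈ A)
    (hB : (1 : C(Y, ℝ)) ∈ B) : (1 : C(X × Y, ℝ)) ∈ pureTensors A B :=
  ⟨1, hA, 1, hB, fun _ => (mul_one 1).symm⟩

lemma mvTens_mvGen_left {S : Set C(X, ℝ)} {D : Set C(Z, ℝ)} (hS : UnitValued S)
    (hS1 : (1 : C(X, ℝ)) ∈ S) (hD : UnitValued D) :
    mvTens (mvGen S) D = mvGen (pureTensors S D) := by
  have hG := isMVSub_mvGen (unitValued_pureTensors hS hD)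
  refine (mvGen_subset hG fun h hh => ?_).antisymm
    (mvGen_mono fun h ⟨s, hs, d, hd, hh⟩ => ⟨s, subset_mvGen S hs, d, hd, hh⟩)
  obtain ⟨f, hf, d, hd, rfl⟩ := eq_of_mem_pureTensors hh
  have hk : d.comp .snd ∈ mvGen (pureTensors S D) :=
    subset_mvGen _ ⟨1, hS1, d, hd, fun _ => (one_mul _).symm⟩
  exact hG.comp_mul_mem_of_mem_mvGen hS .fst hk
    (fun s hs => subset_mvGen _ (comp_fst_mul_comp_snd_mem_pureTensors hs hd)) hf

lemma mvTens_mvGen_right {A : Set C(X, ℝ)} {S : Set C(Y, ℝ)} (hA : UnitValued A)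
    (hS : UnitValued S) (hS1 : (1 : C(Y, ℝ)) ∈ S) :
    mvTens A (mvGen S) = mvGen (pureTensors A S) := by
  have hG := isMVSub_mvGen (unitValued_pureTensors hA hS)
  refine (mvGen_subset hG fun h hh => ?_).antisymm
    (mvGen_mono fun h ⟨a, ha, s, hs, hh⟩ => ⟨a, ha, s, subset_mvGen S hs, hh⟩)
  obtain ⟨a, ha, f, hf, rfl⟩ := eq_of_mem_pureTensors hh
  have hk : a.comp .fst ∈ mvGen (pureTensors A S) :=
    subset_mvGen _ ⟨a, ha, 1, hS1, fun _ => (mul_one _).symm⟩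
  rw [mul_comm]
  refine hG.comp_mul_mem_of_mem_mvGen hS .snd hk (fun s hs => ?_) hf
  rw [mul_comm]
  exact subset_mvGen _ (comp_fst_mul_comp_snd_mem_pureTensors ha hs)

lemma mapsTo_pureTensors_assoc (A : Set C(X, ℝ)) (B : Set C(Y, ℝ)) (D : Set C(Z, ℝ)) :
    MapsTo (fun f => f.comp ((Homeomorph.prodAssoc X Y Z).symm : C(X × (Y × Z), (X × Y) × Z)))
      (pureTensors (pureTensors A B) D) (pureTensors A (pureTensors B D)) := by
  rintro h ⟨f, ⟨a, ha, b, hb, hf⟩, d, hd, hh⟩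
  refine ⟨a, ha, b.comp .fst * d.comp .snd, comp_fst_mul_comp_snd_mem_pureTensors hb hd,
    fun p => ?_⟩
  simp [hh, hf, mul_assoc, Homeomorph.prodAssoc]

lemma mapsTo_pureTensors_assoc_symm (A : Set C(X, ℝ)) (B : Set C(Y, ℝ)) (D : Set C(Z, ℝ)) :
    MapsTo (fun f => f.comp ((Homeomorph.prodAssoc X Y Z) : C((X × Y) × Z, X × (Y × Z))))
      (pureTensors A (pureTensors B D)) (pureTensors (pureTensors A B) D) := by
  rintro h ⟨a, ha, f, ⟨b, hb, d, hd, hf⟩, hh⟩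
  refine ⟨a.comp .fst * b.comp .snd, comp_fst_mul_comp_snd_mem_pureTensors ha hb, d, hd,
    fun p => ?_⟩
  simp [hh, hf, mul_assoc, Homeomorph.prodAssoc]

end Tensor

theorem stmt3_general {X Y Z : Type*}
    [TopologicalSpace X] [TopologicalSpace Y] [TopologicalSpace Z]
    (A : Set C(X, ℝ)) (B : Set C(Y, ℝ)) (D : Set C(Z, ℝ))
    (hA : IsMVSub A) (hB : IsMVSub B) (hD : IsMVSub D)
    (Φ : C((X × Y) × Z, ℝ) → C(X × (Y × Z), ℝ))
    (hΦ : ∀ (f : C((X × Y) × Z, ℝ)) (p : X × (Y × Z)), Φ f p = f ((p.1, p.2.1), p.2.2)) :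
    Set.BijOn Φ (mvTens (mvTens A B) D) (mvTens A (mvTens B D)) ∧
    (∀ f g : C((X × Y) × Z, ℝ), Φ ((f + g) ⊓ 1) = (Φ f + Φ g) ⊓ 1) ∧
    (∀ f : C((X × Y) × Z, ℝ), Φ (1 - f) = 1 - Φ f) ∧
    Φ 0 = 0 := by
  obtain rfl : Φ = fun f => f.comp (Homeomorph.prodAssoc X Y Z).symm :=
    funext fun f => ContinuousMap.ext (hΦ f)
  have hAB := unitValued_pureTensors hA.1 hB.1
  have hBD := unitValued_pureTensors hB.1 hD.1
  refine ⟨?_, fun f g => ContinuousMap.oplus_comp f g _,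
    fun f => ContinuousMap.one_sub_comp f _, ContinuousMap.zero_comp _⟩
  rw [mvTens_eq_mvGen A B, mvTens_mvGen_left hAB (one_mem_pureTensors hA.one_mem hB.one_mem) hD.1,
    mvTens_eq_mvGen B D, mvTens_mvGen_right hA.1 hBD (one_mem_pureTensors hB.one_mem hD.one_mem)]
  exact bijOn_mvGen_comp_homeomorph (unitValued_pureTensors hAB hD.1)
    (unitValued_pureTensors hA.1 hBD) _
    (mapsTo_pureTensors_assoc A B D) (mapsTo_pureTensors_assoc_symm A B D)

/-- precomposition with the canonical homeomorphism
`α : X × (Y × Z) → (X × Y) × Z` is a bijection from `(A ⊗ B) ⊗ D` onto `A ⊗ (B ⊗ D)`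
preserving `⊕`, `*` and `0`; in particular the semisimple tensor product of MV-algebras
is associative. -/
theorem stmt3 {X Y Z : Type*}
    [TopologicalSpace X] [CompactSpace X] [T2Space X]
    [TopologicalSpace Y] [CompactSpace Y] [T2Space Y]
    [TopologicalSpace Z] [CompactSpace Z] [T2Space Z]
    (A : Set C(X, ℝ)) (B : Set C(Y, ℝ)) (D : Set C(Z, ℝ))
    (hA : IsMVSub A) (hB : IsMVSub B) (hD : IsMVSub D)
    (Φ : C((X × Y) × Z, ℝ) → C(X × (Y × Z), ℝ))
    (hΦ : ∀ (f : C((X × Y) × Z, ℝ)) (p : X × (Y × Z)), Φ f p = f ((p.1, p.2.1), p.2.2)) :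
    Set.BijOn Φ (mvTens (mvTens A B) D) (mvTens A (mvTens B D)) ∧
    (∀ f g : C((X × Y) × Z, ℝ), Φ ((f + g) ⊓ 1) = (Φ f + Φ g) ⊓ 1) ∧
    (∀ f : C((X × Y) × Z, ℝ), Φ (1 - f) = 1 - Φ f) ∧
    Φ 0 = 0 :=
  stmt3_general A B D hA hB hD Φ hΦ
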